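/- arXiv:2107.08825 — 7 statements merged into one kernel-verified Lean document; each statement's English description precedes it below -/
import Mathlib

section
/- Let h : [0,r] → [0,∞) be continuous with h(0)=0, differentiable and positive on (0,r), and satisfy t·h'(t)/h(t) - (d-2) ≥ 1/s for some s > 0 and all t ∈ (0,r). Then for every x ∈ [0,r], the integral ∫₀ˣ h(t)/t^{d-1} dt is finite and bounded above by s·h(x)/x^{d-2}. -/
open Set MeasureTheory Filter Topology

/-- If `h : [0,r] → [0,∞)` is continuous with `h 0 = 0`, differentiable and positive
on `(0,r)`, with `t·h'(t)/h(t) ≥ (d-2) + 1/s` on `(0,r)`, then for every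
`x ∈ [0,r]` the integral `∫₀ˣ h(t)/t^(d-1) dt` converges and is at most
`s · h(x)/x^(d-2)`. -/
theorem integral_div_pow_le_of_log_deriv_lower_bound
    (d : ℕ) (hd : 2 ≤ d) (r s : ℝ) (hr : 0 < r) (hs : 0 < s)
    (h h' : ℝ → ℝ)
    (hcont : ContinuousOn h (Icc 0 r)) (h0 : h 0 = 0)
    (hpos : ∀ t ∈ Ioo 0 r, 0 < h t)
    (hderiv : ∀ t ∈ Ioo 0 r, HasDerivAt h (h' t) t)
    (hineq : ∀ t ∈ Ioo 0 r, (d : ℝ) - 2 + 1 / s ≤ t * h' t / h t) :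
    ∀ x ∈ Icc 0 r,
      IntegrableOn (fun t => h t / t ^ (d - 1)) (Ioc 0 x) ∧
      ∫ t in Ioc 0 x, h t / t ^ (d - 1) ≤ s * h x / x ^ (d - 2) := by
  obtain ⟨n, rfl⟩ : ∃ n, d = n + 2 := ⟨d - 2, by omega⟩
  have e1 : n + 2 - 1 = n + 1 := by omega
  have e2 : n + 2 - 2 = n := by omega
  rw [e1, e2] at *
  set f : ℝ → ℝ := fun t => h t / t ^ (n + 1) with hf
  have hineq' : ∀ t ∈ Ioo 0 r, (n : ℝ) + 1 / s ≤ t * h' t / h t := by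
    intro t ht
    have := hineq t ht
    push_cast at this
    linarith
  -- nonnegativity of h on the closed interval
  have hge : ∀ t ∈ Icc 0 r, 0 ≤ h t := by
    intro t ht
    rcases eq_or_lt_of_le ht.1 with h1 | h1
    · rw [← h1, h0]
    rcases eq_or_lt_of_le ht.2 with h2 | h2
    · subst h2
      have hne : (𝓝[Ioo (0:ℝ) t] t).NeBot := by
        rw [← mem_closure_iff_nhdsWithin_neBot, closure_Ioo h1.ne]
        exact ⟨h1.le, le_rfl⟩
      have htend : Filter.Tendsto h (𝓝[Ioo (0:ℝ) t] t) (𝓝 (h t)) :=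
        (hcont t ht).tendsto.mono_left (nhdsWithin_mono _ Ioo_subset_Icc_self)
      exact ge_of_tendsto htend (eventually_nhdsWithin_of_forall fun u hu => (hpos u hu).le)
    · exact (hpos t ⟨h1, h2⟩).le
  -- the comparison function and its derivative
  set g : ℝ → ℝ := fun t => s * h t / t ^ n with hg
  set G : ℝ → ℝ := fun t => s * (h' t * t - n * h t) / t ^ (n + 1) with hG
  have hGd : ∀ t ∈ Ioo 0 r, HasDerivAt g (G t) t := by
    intro t ht
    have ht0 : t ≠ 0 := ht.1.ne'
    have hD := ((hderiv t ht).const_mul s).div (hasDerivAt_pow n t) (pow_ne_zero n ht0)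
    have heq : (s * h' t * t ^ n - s * h t * (↑n * t ^ (n - 1))) / (t ^ n) ^ 2
        = G t := by
      rcases n with _ | m
      · simp [hG]
        field_simp
      · simp only [hG, Nat.add_sub_cancel]
        field_simp
        ring
    rw [heq] at hD
    exact hD
  have hfG : ∀ t ∈ Ioo 0 r, f t ≤ G t := by
    intro t ht
    have ht0 : 0 < t := ht.1
    have hh : 0 < h t := hpos t ht
    have hb : ((n : ℝ) + 1 / s) * h t ≤ t * h' t := (le_div_iff₀ hh).mp (hineq' t ht)
    have h2 : s * (((n : ℝ) + 1 / s) * h t) = s * (n : ℝ) * h t + h t := by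
      field_simp
    have h3 : s * (h' t * t - (n : ℝ) * h t) = s * (t * h' t) - s * (n : ℝ) * h t := by ring
    have hnum : h t ≤ s * (h' t * t - (n : ℝ) * h t) := by
      have := mul_le_mul_of_nonneg_left hb hs.le
      linarith
    exact div_le_div_of_nonneg_right hnum (pow_pos ht0 (n + 1)).le
  intro x hx
  rcases eq_or_lt_of_le hx.1 with hx0 | hx0
  · rw [← hx0]
    simp [h0]
  have hxr : x ≤ r := hx.2
  -- key estimate on [ε, x]
  have key : ∀ ε : ℝ, 0 < ε → ε ≤ x → (∫ t in Ioc ε x, f t) ≤ s * h x / x ^ n := by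
    intro ε hε hεx
    have hsub : Icc ε x ⊆ Icc 0 r := Icc_subset_Icc hε.le hxr
    have hposOn : ∀ t ∈ Icc ε x, (0:ℝ) < t := fun t ht => hε.trans_le ht.1
    have hfcont : ContinuousOn f (Icc ε x) :=
      (hcont.mono hsub).div (continuous_pow (n + 1)).continuousOn
        (fun t ht => pow_ne_zero _ (hposOn t ht).ne')
    have hfint : IntegrableOn f (Icc ε x) := hfcont.integrableOn_Icc
    have hgcont : ContinuousOn g (Icc ε x) :=
      (continuousOn_const.mul (hcont.mono hsub)).div (continuous_pow n).continuousOn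
        (fun t ht => pow_ne_zero _ (hposOn t ht).ne')
    have hder' : ∀ t ∈ Ioo ε x, HasDerivWithinAt g (G t) (Ioi t) t := fun t ht =>
      (hGd t ⟨hε.trans ht.1, ht.2.trans_le hxr⟩).hasDerivWithinAt
    have hle : (∫ t in ε..x, f t) ≤ g x - g ε :=
      intervalIntegral.integral_le_sub_of_hasDeriv_right_of_le hεx hgcont hder' hfint
        (fun t ht => hfG t ⟨hε.trans ht.1, ht.2.trans_le hxr⟩)
    have hgε : 0 ≤ g ε := by
      have : 0 ≤ h ε := hge ε ⟨hε.le, hεx.trans hxr⟩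
      have : 0 ≤ s * h ε := mul_nonneg hs.le this
      positivity
    rw [intervalIntegral.integral_of_le hεx] at hle
    calc (∫ t in Ioc ε x, f t) ≤ g x - g ε := hle
      _ ≤ g x := by linarith
  -- the approximating sequence
  set a : ℕ → ℝ := fun i => x * (1 / ((i : ℝ) + 1)) with ha
  have ha_pos : ∀ i, 0 < a i := fun i => by positivity
  have ha_le : ∀ i, a i ≤ x := by
    intro i
    show x * (1 / ((i : ℝ) + 1)) ≤ x
    rw [mul_one_div]
    apply div_le_self hx0.le
    linarith [Nat.cast_nonneg (α := ℝ) i]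
  have ha_tend : Filter.Tendsto a Filter.atTop (𝓝 0) := by
    simpa [ha, one_div] using tendsto_one_div_add_atTop_nhds_zero_nat.const_mul x
  have hnn : ∀ t ∈ Ioc (0:ℝ) x, 0 ≤ f t := by
    intro t ht
    exact div_nonneg (hge t ⟨ht.1.le, ht.2.trans hxr⟩) (pow_nonneg ht.1.le _)
  have hfi : ∀ i, IntegrableOn f (Ioc (a i) x) := by
    intro i
    have hsub : Icc (a i) x ⊆ Icc 0 r := Icc_subset_Icc (ha_pos i).le hxr
    have hfcont : ContinuousOn f (Icc (a i) x) :=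
      (hcont.mono hsub).div (continuous_pow (n + 1)).continuousOn
        (fun t ht => pow_ne_zero _ ((ha_pos i).trans_le ht.1).ne')
    exact hfcont.integrableOn_Icc.mono_set Ioc_subset_Icc_self
  have hint0 : IntegrableOn f (Ioc 0 x) := by
    apply MeasureTheory.integrableOn_Ioc_of_intervalIntegral_norm_bounded_left
      (I := s * h x / x ^ n) hfi ha_tend
    filter_upwards with i
    have : (∫ t in Ioc (a i) x, ‖f t‖) = ∫ t in Ioc (a i) x, f t := by
      apply setIntegral_congr_fun measurableSet_Ioc
      intro t ht
      exact Real.norm_of_nonneg (hnn t ⟨(ha_pos i).trans ht.1, ht.2⟩)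
    rw [this]
    exact key (a i) (ha_pos i) (ha_le i)
  refine ⟨hint0, ?_⟩
  -- pass to the limit
  have hmono : Monotone fun i : ℕ => Ioc (a i) x := by
    intro i j hij
    apply Ioc_subset_Ioc_left
    rw [ha]
    apply mul_le_mul_of_nonneg_left _ hx0.le
    apply one_div_le_one_div_of_le (by positivity)
    have : (i : ℝ) ≤ j := Nat.cast_le.mpr hij
    linarith
  have hunion : (⋃ i, Ioc (a i) x) = Ioc 0 x := by
    ext t
    simp only [mem_iUnion, mem_Ioc]
    constructor
    · rintro ⟨i, h1, h2⟩
      exact ⟨(ha_pos i).trans h1, h2⟩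
    · rintro ⟨h1, h2⟩
      obtain ⟨k, hk⟩ := exists_nat_gt (x / t)
      refine ⟨k, ?_, h2⟩
      show x * (1 / ((k : ℝ) + 1)) < t
      rw [mul_one_div, div_lt_iff₀ (by positivity)]
      have hxk : x < t * k := by
        rw [div_lt_iff₀ h1] at hk
        linarith
      nlinarith
  have hint0' : IntegrableOn f (⋃ i, Ioc (a i) x) := by rw [hunion]; exact hint0
  have htend := tendsto_setIntegral_of_monotone (fun i => measurableSet_Ioc) hmono hint0'
  rw [hunion] at htend
  exact le_of_tendsto htend (Filter.Eventually.of_forall fun i => key (a i) (ha_pos i) (ha_le i))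
end

section
/- Let d > 2 and let h : [0,r] → [0,∞) be continuous, strictly increasing with h(0)=0, differentiable on (0,r), satisfying t·h'(t)/h(t) ≥ (d-2) + 1/s for some s > 0 on (0,r). Then the function x ↦ x / (h^{-1}(x))^{d-2} is monotone increasing on [0, h(r)]. -/
open Set

/-- For `d > 2` and `h` continuous, strictly increasing on `[0,r]` with `h 0 = 0`,
differentiable on `(0,r)` with `t·h'(t)/h(t) ≥ (d-2) + 1/s`, the function
`x ↦ x / (h⁻¹(x))^(d-2)` is monotone increasing on `[0, h r]`
(here `g` is the inverse of `h`). -/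
theorem monotoneOn_div_inv_pow
    (d : ℕ) (hd : 2 < d) (r s : ℝ) (hr : 0 < r) (hs : 0 < s)
    (h h' g : ℝ → ℝ)
    (hcont : ContinuousOn h (Icc 0 r)) (h0 : h 0 = 0)
    (hmono : StrictMonoOn h (Icc 0 r))
    (hpos : ∀ t ∈ Ioo 0 r, 0 < h t)
    (hderiv : ∀ t ∈ Ioo 0 r, HasDerivAt h (h' t) t)
    (hineq : ∀ t ∈ Ioo 0 r, (d : ℝ) - 2 + 1 / s ≤ t * h' t / h t)
    (hg1 : ∀ t ∈ Icc 0 r, g (h t) = t)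
    (hg2 : ∀ x ∈ Icc 0 (h r), h (g x) = x) :
    MonotoneOn (fun x => x / (g x) ^ (d - 2)) (Icc 0 (h r)) := by
  have hnn : ∀ u ∈ Icc (0:ℝ) r, 0 ≤ h u := by
    intro u hu
    rcases eq_or_lt_of_le hu.1 with h0u | h0u
    · rw [← h0u, h0]
    · have := hmono (left_mem_Icc.mpr hr.le) hu h0u
      rw [h0] at this; linarith
  -- key: every point of [0, h r] is h t for some t ∈ [0,r], and g recovers t
  have key : ∀ x ∈ Icc 0 (h r), ∃ t ∈ Icc 0 r, h t = x ∧ g x = t := by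
    intro x hx
    have hx' : x ∈ Icc (h 0) (h r) := by rw [h0]; exact hx
    obtain ⟨t, ht, hht⟩ := intermediate_value_Icc hr.le hcont hx'
    exact ⟨t, ht, hht, by rw [← hht, hg1 t ht]⟩
  set φ : ℝ → ℝ := fun t => h t / t ^ (d - 2) with hφ
  have hcast : ((d - 2 : ℕ) : ℝ) = (d : ℝ) - 2 := by
    push_cast [Nat.cast_sub (by omega : 2 ≤ d)]; ring
  have hφmono : ∀ t ∈ Icc (0:ℝ) r, ∀ u ∈ Icc (0:ℝ) r, t ≤ u → φ t ≤ φ u := by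
    intro t ht u hu htu
    rcases eq_or_lt_of_le ht.1 with h0t | h0t
    · have hφt : φ t = 0 := by simp [hφ, ← h0t, h0]
      rw [hφt]
      exact div_nonneg (hnn u hu) (pow_nonneg hu.1 _)
    · rcases eq_or_lt_of_le htu with rfl | htu'
      · exact le_refl _
      · -- strict mono on [t,u] via positive derivative
        have hsub : Icc t u ⊆ Icc 0 r := Icc_subset_Icc ht.1 hu.2
        have hcφ : ContinuousOn φ (Icc t u) := by
          apply ContinuousOn.div (hcont.mono hsub) ((continuous_pow _).continuousOn)
          intro v hv
          exact pow_ne_zero _ (ne_of_gt (lt_of_lt_of_le h0t hv.1))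
        have hderφ : ∀ v ∈ interior (Icc t u), 0 < deriv φ v := by
          intro v hv
          rw [interior_Icc] at hv
          have hv' : v ∈ Ioo 0 r := ⟨lt_trans h0t hv.1, lt_of_lt_of_le hv.2 hu.2⟩
          have hvpos : (0:ℝ) < v := hv'.1
          have H1 := hderiv v hv'
          have H2 : HasDerivAt (fun w : ℝ => w ^ (d - 2)) (((d-2 : ℕ) : ℝ) * v ^ (d - 2 - 1)) v :=
            hasDerivAt_pow _ _
          have H := H1.div H2 (pow_ne_zero _ (ne_of_gt hvpos))
          have hdv : deriv φ v =
              (h' v * v ^ (d - 2) - h v * (((d-2 : ℕ) : ℝ) * v ^ (d - 2 - 1))) / (v ^ (d - 2)) ^ 2 :=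
            H.deriv
          rw [hdv]
          apply div_pos
          · have hhv := hpos v hv'
            have h1 := hineq v hv'
            rw [le_div_iff₀ hhv] at h1
            have hk : h v / s ≤ v * h' v - ((d:ℝ) - 2) * h v := by
              have : (1/s) * h v = h v / s := by ring
              nlinarith
            have hvs : 0 < h v / s := div_pos hhv hs
            have hpow : (0:ℝ) < v ^ (d - 3) := pow_pos hvpos _
            have hsplit : v ^ (d - 2) = v ^ (d - 3) * v := by
              rw [← pow_succ]
              congr 1
              omega
            have hidx : d - 2 - 1 = d - 3 := by omega
            rw [hsplit, hidx, hcast]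
            nlinarith
          · positivity
        have := strictMonoOn_of_deriv_pos (convex_Icc t u) hcφ hderφ
        exact le_of_lt (this (left_mem_Icc.mpr htu) (right_mem_Icc.mpr htu) htu')
  intro x hx y hy hxy
  obtain ⟨t, ht, hht, hgt⟩ := key x hx
  obtain ⟨u, hu, hhu, hgu⟩ := key y hy
  have htu : t ≤ u := by
    by_contra hlt
    push_neg at hlt
    have := hmono hu ht hlt
    rw [hht, hhu] at this
    linarith
  simp only
  rw [hgt, hgu, ← hht, ← hhu]
  exact hφmono t ht u hu htu
end

section
/- Let h : [0,r] → [0,∞) be continuous, strictly increasing with h(0)=0, differentiable on (0,r), satisfying t·h'(t)/h(t) ≥ 1/s for some s > 0 on (0,r) (the case d = 2). Then for any B ≥ r, the function x ↦ x · ln(B e^{s} / h^{-1}(x)) is monotone increasing on [0, h(r)]. -/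
open Set

/-- For `d = 2`: if `h` is continuous, strictly increasing on `[0,r]` with `h 0 = 0`,
differentiable on `(0,r)` with `t·h'(t)/h(t) ≥ 1/s` on `(0,r)`, then for any `B ≥ r`
the function `x ↦ x · ln(B·e^s / h⁻¹(x))` is monotone increasing on `[0, h r]`
(here `g` is the inverse of `h`, and the value at `x = 0` is `0`). -/
theorem monotoneOn_mul_log_inv
    (r s B : ℝ) (hr : 0 < r) (hs : 0 < s) (hB : r ≤ B)
    (h h' g : ℝ → ℝ)
    (hcont : ContinuousOn h (Icc 0 r)) (h0 : h 0 = 0)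
    (hmono : StrictMonoOn h (Icc 0 r))
    (hpos : ∀ t ∈ Ioo 0 r, 0 < h t)
    (hderiv : ∀ t ∈ Ioo 0 r, HasDerivAt h (h' t) t)
    (hineq : ∀ t ∈ Ioo 0 r, 1 / s ≤ t * h' t / h t)
    (hg1 : ∀ t ∈ Icc 0 r, g (h t) = t)
    (hg2 : ∀ x ∈ Icc 0 (h r), h (g x) = x) :
    MonotoneOn (fun x => x * Real.log (B * Real.exp s / g x)) (Icc 0 (h r)) := by
  have hBpos : 0 < B := lt_of_lt_of_le hr hB
  set L : ℝ := Real.log (B * Real.exp s) with hL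
  have hLval : L = Real.log B + s := by
    rw [hL, Real.log_mul hBpos.ne' (Real.exp_pos s).ne', Real.log_exp]
  -- preimage lemma
  have hpre : ∀ x ∈ Icc 0 (h r), ∃ t ∈ Icc 0 r, h t = x ∧ g x = t := by
    intro x hx
    have ivt := intermediate_value_Icc hr.le hcont
    rw [h0] at ivt
    obtain ⟨t, ht, hht⟩ := ivt hx
    exact ⟨t, ht, hht, by rw [← hht, hg1 t ht]⟩
  intro x hx y hy hxy
  obtain ⟨t, ht, hht, hgx⟩ := hpre x hx
  obtain ⟨u, hu, hhu, hgy⟩ := hpre y hy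
  have htu : t ≤ u := by
    by_contra hc
    push_neg at hc
    have := hmono hu ht hc
    rw [hht, hhu] at this; linarith
  simp only [hgx, hgy]
  rcases eq_or_lt_of_le hx.1 with hx0 | hx0
  · -- x = 0 case
    rw [← hx0]
    simp only [zero_mul]
    have hy0 : 0 ≤ y := hy.1
    rcases eq_or_lt_of_le hy0 with hy0' | hy0'
    · rw [← hy0']; simp
    · have hu0 : 0 < u := by
        rcases eq_or_lt_of_le hu.1 with h' | h'
        · exfalso; rw [← h', h0] at hhu; linarith
        · exact h'
      have : (1 : ℝ) ≤ B * Real.exp s / u := by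
        rw [le_div_iff₀ hu0]
        have h1 : (1:ℝ) ≤ Real.exp s := by
          have := Real.one_le_exp hs.le; linarith
        nlinarith [hu.2, hB]
      exact mul_nonneg hy0 (Real.log_nonneg this)
  · -- x > 0 case
    have ht0 : 0 < t := by
      rcases eq_or_lt_of_le ht.1 with h' | h'
      · exfalso; rw [← h', h0] at hht; linarith
      · exact h'
    have hu0 : 0 < u := lt_of_lt_of_le ht0 htu
    set φ : ℝ → ℝ := fun τ => h τ * (L - Real.log τ) with hφ
    have hre : ∀ τ : ℝ, 0 < τ → h τ * Real.log (B * Real.exp s / τ) = φ τ := by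
      intro τ hτ
      rw [hφ, Real.log_div (by positivity) hτ.ne']
    rw [← hht, ← hhu, hre t ht0, hre u hu0]
    -- φ is monotone on [t,u]
    have hsub : Icc t u ⊆ Icc 0 r := Icc_subset_Icc ht0.le hu.2
    have hcφ : ContinuousOn φ (Icc t u) := by
      apply ContinuousOn.mul (hcont.mono hsub)
      apply ContinuousOn.sub continuousOn_const
      apply Real.continuousOn_log.mono
      intro τ hτ
      simp only [mem_compl_iff, mem_singleton_iff]
      have : 0 < τ := lt_of_lt_of_le ht0 hτ.1
      exact this.ne'
    have hderφ : ∀ τ ∈ Ioo t u, HasDerivAt φ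
        (h' τ * (L - Real.log τ) + h τ * (-τ⁻¹)) τ := by
      intro τ hτ
      have hτIoo : τ ∈ Ioo 0 r := ⟨lt_trans ht0 hτ.1, lt_of_lt_of_le hτ.2 hu.2⟩
      have hlog : HasDerivAt (fun τ : ℝ => L - Real.log τ) (-τ⁻¹) τ :=
        (Real.hasDerivAt_log hτIoo.1.ne').const_sub L
      exact (hderiv τ hτIoo).mul hlog
    have hmφ : MonotoneOn φ (Icc t u) := by
      apply monotoneOn_of_deriv_nonneg (convex_Icc t u) hcφ
      · intro τ hτ
        rw [interior_Icc] at hτ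
        exact ((hderφ τ hτ).differentiableAt).differentiableWithinAt
      · intro τ hτ
        rw [interior_Icc] at hτ
        rw [(hderφ τ hτ).deriv]
        have hτIoo : τ ∈ Ioo 0 r := ⟨lt_trans ht0 hτ.1, lt_of_lt_of_le hτ.2 hu.2⟩
        have hhτ : 0 < h τ := hpos τ hτIoo
        have hτ0 : 0 < τ := hτIoo.1
        have hi := hineq τ hτIoo
        have ha1 : h τ ≤ s * (τ * h' τ) := by
          rw [div_le_div_iff₀ hs (by positivity)] at hi
          linarith
        have ha2 : s ≤ L - Real.log τ := by
          have hlog : Real.log τ ≤ Real.log B :=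
            Real.log_le_log hτ0 (le_trans (le_of_lt hτIoo.2) hB)
          rw [hLval]; linarith
        have hh' : 0 < h' τ := by nlinarith [mul_pos hs hτ0]
        have key : h τ * τ⁻¹ ≤ h' τ * (L - Real.log τ) := by
          have h3 : s * (τ * h' τ) ≤ (L - Real.log τ) * (τ * h' τ) :=
            mul_le_mul_of_nonneg_right ha2 (mul_pos hτ0 hh').le
          have h4 : h τ ≤ (L - Real.log τ) * (τ * h' τ) := le_trans ha1 h3
          calc h τ * τ⁻¹ ≤ ((L - Real.log τ) * (τ * h' τ)) * τ⁻¹ :=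
                mul_le_mul_of_nonneg_right h4 (inv_nonneg.mpr hτ0.le)
            _ = h' τ * (L - Real.log τ) := by field_simp
        linarith
    exact hmφ ⟨le_refl t, htu⟩ ⟨htu, le_refl u⟩ htu
end

section
/- Let μ be a Borel measure concentrated on a μ-measurable set S contained in closedBall(0,r) ⊂ ℝ^d, with total mass M and modulus of continuity h_μ. If h : [0,r] → [0,∞) satisfies h ≥ h_μ on [0,r], and h is extended to (r,∞) by the constant value h(r), then M ≤ m_h^∞(S) ≤ m_h^t(S) for every radius of covering t ∈ (0,∞]. -/
open MeasureTheory Metric Set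

/-- The `h`-Hausdorff content of covering radius `t` of a set `S ⊆ ℝ^d`. -/
noncomputable def hausdorffContent (d : ℕ) (h : ℝ → ENNReal) (t : ENNReal)
    (S : Set (EuclideanSpace ℝ (Fin d))) : ENNReal :=
  ⨅ (N : Set ℕ) (c : ℕ → EuclideanSpace ℝ (Fin d)) (ρ : ℕ → ℝ)
    (_ : ∀ j ∈ N, 0 ≤ ρ j) (_ : ∀ j ∈ N, ENNReal.ofReal (ρ j) < t)
    (_ : S ⊆ ⋃ j ∈ N, closedBall (c j) (ρ j)),
    ∑' j : N, h (ρ j)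

/-- If a Borel measure `μ` of total mass `M` is concentrated on a measurable set
`S ⊆ closedBall 0 r`, and `h` dominates the modulus of continuity of `μ` on
`[0,r]` and is extended to `(r,∞)` by the constant value `h r`, then
`M ≤ m_h^∞(S) ≤ m_h^t(S)` for every covering radius `t ∈ (0,∞]`. -/
theorem total_mass_le_hausdorffContent
    (d : ℕ) (r : ℝ) (hr : 0 < r)
    (μ : Measure (EuclideanSpace ℝ (Fin d)))
    (S : Set (EuclideanSpace ℝ (Fin d))) (hS : MeasurableSet S)
    (hSr : S ⊆ closedBall (0 : EuclideanSpace ℝ (Fin d)) r)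
    (hconc : μ S = μ Set.univ)
    (h : ℝ → ENNReal)
    (hmaj : ∀ u ∈ Icc 0 r,
      (⨆ y : EuclideanSpace ℝ (Fin d), μ (closedBall y u)) ≤ h u)
    (hext : ∀ u : ℝ, r ≤ u → h u = h r) :
    ∀ t : ENNReal, 0 < t →
      μ S ≤ hausdorffContent d h ⊤ S ∧
      hausdorffContent d h ⊤ S ≤ hausdorffContent d h t S := by
  intro t ht
  constructor
  · rw [hausdorffContent]
    refine le_iInf fun N => le_iInf fun c => le_iInf fun ρ => le_iInf fun hρ =>
      le_iInf fun _ => le_iInf fun hcov => ?_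
    calc μ S ≤ μ (⋃ j ∈ N, closedBall (c j) (ρ j)) := measure_mono hcov
      _ ≤ ∑' j : N, μ (closedBall (c j) (ρ j)) := measure_biUnion_le μ N.to_countable _
      _ ≤ ∑' j : N, h (ρ j) := by
          refine ENNReal.tsum_le_tsum fun j => ?_
          rcases le_or_gt (ρ j) r with hle | hlt
          · exact le_trans (le_iSup (fun y => μ (closedBall y (ρ j))) (c j))
              (hmaj (ρ j) ⟨hρ j j.2, hle⟩)
          · rw [hext (ρ j) hlt.le]
            calc μ (closedBall (c j) (ρ j)) ≤ μ Set.univ := measure_mono (subset_univ _)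
              _ = μ S := hconc.symm
              _ ≤ μ (closedBall (0 : EuclideanSpace ℝ (Fin d)) r) := measure_mono hSr
              _ ≤ ⨆ y : EuclideanSpace ℝ (Fin d), μ (closedBall y r) :=
                  le_iSup (fun y => μ (closedBall y r)) 0
              _ ≤ h r := hmaj r ⟨hr.le, le_refl r⟩
  · rw [hausdorffContent, hausdorffContent]
    refine le_iInf fun N => le_iInf fun c => le_iInf fun ρ => le_iInf fun hρ =>
      le_iInf fun _ => le_iInf fun hcov => ?_
    refine iInf_le_of_le N (iInf_le_of_le c (iInf_le_of_le ρ (iInf_le_of_le hρ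
      (iInf_le_of_le (fun j _ => ENNReal.ofReal_lt_top) (iInf_le _ hcov)))))
end

section
/- For every integer d ≥ 3 and every real p with d-2 < p ≤ d, one has c_p^{(d-2)/p - 1} ≤ (Γ(d/2 + 1))^{2/d} ≤ d/2, where c_p = π^{p/2}/Γ(p/2+1). -/
open Real

/-- Monotonicity of `x ↦ Γ(x+1)^(1/x)`, from log-convexity of `Γ`. -/
lemma gamma_rpow_slope_mono {a b : ℝ} (ha : 0 < a) (hab : a ≤ b) :
    Real.Gamma (a + 1) ^ (1 / a) ≤ Real.Gamma (b + 1) ^ (1 / b) := by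
  have hb : 0 < b := ha.trans_le hab
  have hΓa : 0 < Real.Gamma (a + 1) := Real.Gamma_pos_of_pos (by linarith)
  have hΓb : 0 < Real.Gamma (b + 1) := Real.Gamma_pos_of_pos (by linarith)
  have hsec := Real.convexOn_log_Gamma.secant_mono (a := 1) (x := 1 + a) (y := 1 + b)
    (by norm_num) (by simp [Set.mem_Ioi]; linarith) (by simp [Set.mem_Ioi]; linarith)
    (by intro h; nlinarith) (by intro h; nlinarith) (by linarith)
  simp only [Function.comp_apply, Real.Gamma_one, Real.log_one, sub_zero, add_sub_cancel_left]
    at hsec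
  rw [Real.rpow_def_of_pos hΓa, Real.rpow_def_of_pos hΓb]
  apply Real.exp_le_exp.2
  rw [add_comm 1 a, add_comm 1 b] at hsec
  calc Real.log (Real.Gamma (a + 1)) * (1 / a) = Real.log (Real.Gamma (a + 1)) / a := by ring
    _ ≤ Real.log (Real.Gamma (b + 1)) / b := hsec
    _ = Real.log (Real.Gamma (b + 1)) * (1 / b) := by ring

/-- `Γ(x+1) ≤ x^x` at half-integers `x = (n+2)/2`. -/
lemma gamma_le_rpow_self : ∀ n : ℕ,
    Real.Gamma (((n : ℝ) + 2) / 2 + 1) ≤ (((n : ℝ) + 2) / 2) ^ (((n : ℝ) + 2) / 2) := by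
  intro n
  induction n using Nat.strong_induction_on with
  | _ n ih =>
    match n with
    | 0 => norm_num
    | 1 =>
        simp only [Nat.cast_one]
        have h1 : ((1:ℝ) + 2) / 2 + 1 = (1/2 + 1) + 1 := by norm_num
        rw [h1, Real.Gamma_add_one (by norm_num), Real.Gamma_add_one (by norm_num),
          Real.Gamma_one_half_eq]
        have hsq : Real.sqrt Real.pi ≤ 2 := by
          rw [show (2:ℝ) = Real.sqrt 4 by
            rw [show (4:ℝ) = 2^2 by norm_num, Real.sqrt_sq]; norm_num]
          exact Real.sqrt_le_sqrt (by nlinarith [Real.pi_le_four])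
        have h2 : ((3:ℝ)/2) ^ ((1:ℝ)) ≤ ((3:ℝ)/2) ^ (((1:ℝ) + 2)/2) :=
          Real.rpow_le_rpow_of_exponent_le (by norm_num) (by norm_num)
        rw [Real.rpow_one] at h2
        nlinarith [Real.sqrt_nonneg Real.pi]
    | (m + 2) =>
        have hm := ih m (by omega)
        push_cast
        have hx : (0:ℝ) < ((m : ℝ) + 2) / 2 := by positivity
        have key : ((m : ℝ) + 2 + 2) / 2 + 1 = (((m : ℝ) + 2) / 2 + 1) + 1 := by
          ring
        rw [key, Real.Gamma_add_one (by positivity)]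
        have hb : ((m : ℝ) + 2) / 2 ≤ ((m : ℝ) + 2 + 2) / 2 := by linarith
        calc (((m : ℝ) + 2) / 2 + 1) * Real.Gamma (((m : ℝ) + 2) / 2 + 1)
            ≤ (((m : ℝ) + 2 + 2) / 2) * ((((m : ℝ) + 2) / 2) ^ (((m : ℝ) + 2) / 2)) := by
              apply mul_le_mul (by linarith) hm (Real.Gamma_pos_of_pos (by positivity)).le ?_
              · positivity
          _ ≤ (((m : ℝ) + 2 + 2) / 2) * ((((m : ℝ) + 2 + 2) / 2) ^ (((m : ℝ) + 2) / 2)) := by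
              apply mul_le_mul_of_nonneg_left _ (by positivity)
              exact Real.rpow_le_rpow hx.le hb (by positivity)
          _ = (((m : ℝ) + 2 + 2) / 2) ^ (((m : ℝ) + 2 + 2) / 2) := by
              rw [show ((m : ℝ) + 2 + 2) / 2 = ((m : ℝ) + 2) / 2 + 1 by ring,
                Real.rpow_add_one (by positivity)]
              ring

/-- For every integer `d ≥ 3` and every real `p` with `d - 2 < p ≤ d`, the
constant `c_p = π^(p/2)/Γ(p/2+1)` satisfies
`c_p^((d-2)/p - 1) ≤ Γ(d/2+1)^(2/d) ≤ d/2`. -/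
theorem hausdorff_norm_const_rpow_le
    (d : ℕ) (hd : 3 ≤ d) (p : ℝ) (hp1 : (d : ℝ) - 2 < p) (hp2 : p ≤ (d : ℝ)) :
    (Real.pi ^ (p / 2) / Real.Gamma (p / 2 + 1)) ^ (((d : ℝ) - 2) / p - 1) ≤
      (Real.Gamma ((d : ℝ) / 2 + 1)) ^ (2 / (d : ℝ)) ∧
    (Real.Gamma ((d : ℝ) / 2 + 1)) ^ (2 / (d : ℝ)) ≤ (d : ℝ) / 2 := by
  have hd3 : (3:ℝ) ≤ (d:ℝ) := by exact_mod_cast hd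
  have hd0 : (0:ℝ) < d := by linarith
  have hp0 : 0 < p := by linarith
  have hΓp : 0 < Real.Gamma (p / 2 + 1) := Real.Gamma_pos_of_pos (by positivity)
  have hΓd : 0 < Real.Gamma ((d:ℝ) / 2 + 1) := Real.Gamma_pos_of_pos (by positivity)
  have hcp : 0 < Real.pi ^ (p / 2) / Real.Gamma (p / 2 + 1) := by positivity
  -- 1 ≤ Γ(d/2+1)^(2/d)
  have hG1 : 1 ≤ Real.Gamma ((d:ℝ) / 2 + 1) ^ (2 / (d:ℝ)) := by
    have := gamma_rpow_slope_mono (a := 1) (b := (d:ℝ)/2) one_pos (by linarith)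
    rw [show (1:ℝ) + 1 = 2 by norm_num, Real.Gamma_two, Real.one_rpow,
      show 1 / ((d:ℝ)/2) = 2 / (d:ℝ) by field_simp] at this
    exact this
  constructor
  · -- left inequality
    rcases le_or_gt 1 (Real.pi ^ (p / 2) / Real.Gamma (p / 2 + 1)) with hc | hc
    · calc (Real.pi ^ (p / 2) / Real.Gamma (p / 2 + 1)) ^ (((d : ℝ) - 2) / p - 1) ≤ 1 := by
            apply Real.rpow_le_one_of_one_le_of_nonpos hc
            have : ((d:ℝ) - 2) / p < 1 := (div_lt_one hp0).2 hp1
            linarith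
        _ ≤ _ := hG1
    · have hexp : -(2 / p) ≤ ((d : ℝ) - 2) / p - 1 := by
        rw [show ((d : ℝ) - 2) / p - 1 = ((d:ℝ) - 2 - p) / p by field_simp,
          show -(2/p) = (-2)/p by ring]
        gcongr
        linarith
      have step1 : (Real.pi ^ (p / 2) / Real.Gamma (p / 2 + 1)) ^ (((d : ℝ) - 2) / p - 1)
          ≤ (Real.pi ^ (p / 2) / Real.Gamma (p / 2 + 1)) ^ (-(2 / p)) :=
        Real.rpow_le_rpow_of_exponent_ge hcp hc.le hexp
      have step2 : (Real.pi ^ (p / 2) / Real.Gamma (p / 2 + 1)) ^ (-(2 / p))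
          = Real.Gamma (p / 2 + 1) ^ (2 / p) / Real.pi := by
        rw [Real.rpow_neg hcp.le, Real.div_rpow (by positivity) hΓp.le,
          ← Real.rpow_mul Real.pi_pos.le, show (p/2)*(2/p) = 1 by field_simp,
          Real.rpow_one, inv_div]
      have step3 : Real.Gamma (p / 2 + 1) ^ (2 / p) ≤ Real.Gamma ((d:ℝ) / 2 + 1) ^ (2 / (d:ℝ)) := by
        have := gamma_rpow_slope_mono (a := p/2) (b := (d:ℝ)/2) (by linarith) (by linarith)
        rw [show 1 / (p/2) = 2 / p by field_simp, show 1 / ((d:ℝ)/2) = 2 / (d:ℝ) by field_simp]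
          at this
        exact this
      calc (Real.pi ^ (p / 2) / Real.Gamma (p / 2 + 1)) ^ (((d : ℝ) - 2) / p - 1)
          ≤ Real.Gamma (p / 2 + 1) ^ (2 / p) / Real.pi := step2 ▸ step1
        _ ≤ Real.Gamma (p / 2 + 1) ^ (2 / p) := by
            apply div_le_self (by positivity)
            nlinarith [Real.pi_gt_three]
        _ ≤ _ := step3
  · -- right inequality
    obtain ⟨m, rfl⟩ : ∃ m, d = m + 2 + 1 := ⟨d - 3, by omega⟩
    have h := gamma_le_rpow_self (m + 1)
    push_cast at h hΓd ⊢
    rw [show (m:ℝ) + 1 + 2 = (m:ℝ) + 2 + 1 by ring] at h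
    set D : ℝ := (m:ℝ) + 2 + 1 with hD
    have hD0 : (0:ℝ) < D := by positivity
    calc Real.Gamma (D / 2 + 1) ^ (2 / D) ≤ ((D/2) ^ (D/2)) ^ (2/D) :=
          Real.rpow_le_rpow hΓd.le h (by positivity)
      _ = (D/2) ^ ((D/2) * (2/D)) := by rw [← Real.rpow_mul (by positivity)]
      _ = D / 2 := by rw [show (D/2) * (2/D) = 1 by field_simp, Real.rpow_one]
end

section
/- Let O ⊆ ℝ be open and l : O → ℂ a bilipschitz injective map. The measure σ on ℂ defined as the pushforward under l of |l'| dλ restricted to O (equivalently, the 1-dimensional Hausdorff measure on l(O)) has modulus of continuity satisfying σ(closedBall(z,t) ∩ l(O)) ≤ 2√2 · Lip(l) · Lip(l^{-1}) · t for all z ∈ ℂ and t ≥ 0. -/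
/-!
The part of `l(O)` inside `closedBall z t` is the image of `s = O ∩ l⁻¹(closedBall z t)`.
By the inverse Lipschitz bound, `s` has diameter at most `K' · 2t`, hence Lebesgue measure
(= `μH[1]` on `ℝ`) at most `2K't`; a `K`-Lipschitz map multiplies `μH[1]` by at most `K`.
-/

open Metric Set MeasureTheory
open scoped ENNReal NNReal

theorem ediam_le_mul_ediam_image_of_dist_le_mul {α β : Type*} [PseudoMetricSpace α]
    [PseudoMetricSpace β] {f : α → β} {s : Set α} {K : ℝ≥0}
    (h : ∀ x ∈ s, ∀ y ∈ s, dist x y ≤ K * dist (f x) (f y)) :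
    ediam s ≤ K * ediam (f '' s) :=
  ediam_le fun x hx y hy =>
    calc edist x y ≤ K * edist (f x) (f y) := by
          rw [edist_dist, edist_dist, ← ENNReal.ofReal_coe_nnreal,
            ← ENNReal.ofReal_mul K.coe_nonneg]
          exact ENNReal.ofReal_le_ofReal (h x hx y hy)
      _ ≤ K * ediam (f '' s) := by
          gcongr
          exact edist_le_ediam_of_mem (mem_image_of_mem f hx) (mem_image_of_mem f hy)

theorem hausdorffMeasure_one_image_le_mul_ediam {X : Type*} [MetricSpace X]
    [MeasurableSpace X] [BorelSpace X] {f : ℝ → X} {s : Set ℝ} {K K' : ℝ≥0}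
    (hf : LipschitzOnWith K f s) (hf' : ∀ x ∈ s, ∀ y ∈ s, dist x y ≤ K' * dist (f x) (f y)) :
    μH[1] (f '' s) ≤ K * K' * ediam (f '' s) :=
  calc μH[1] (f '' s) ≤ K * μH[1] s := by
        simpa using hf.hausdorffMeasure_image_le zero_le_one
    _ = K * volume s := by rw [hausdorffMeasure_real]
    _ ≤ K * ediam s := by gcongr; exact Real.volume_le_diam s
    _ ≤ K * K' * ediam (f '' s) := by
        rw [mul_assoc]
        gcongr
        exact ediam_le_mul_ediam_image_of_dist_le_mul hf'

theorem length_measure_modulus_of_continuity_general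
    (O : Set ℝ) (l : ℝ → ℂ)
    (K : ℝ) (hK : 0 ≤ K)
    (hLip : ∀ x₁ ∈ O, ∀ x₂ ∈ O, ‖l x₂ - l x₁‖ ≤ K * |x₂ - x₁|)
    (K' : ℝ) (hK' : 0 ≤ K')
    (hbil : ∀ x₁ ∈ O, ∀ x₂ ∈ O, |x₂ - x₁| ≤ K' * ‖l x₂ - l x₁‖) :
    ∀ (z : ℂ) (t : ℝ), 0 ≤ t →
      (μH[1] : Measure ℂ) (closedBall z t ∩ (l '' O)) ≤
        ENNReal.ofReal (2 * Real.sqrt 2 * K * K' * t) := by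
  intro z t ht
  lift K to ℝ≥0 using hK
  lift K' to ℝ≥0 using hK'
  set s := O ∩ l ⁻¹' closedBall z t
  have hlip : LipschitzOnWith K l s := .of_dist_le_mul fun x hx y hy => by
    simpa [dist_eq_norm, Real.dist_eq] using hLip y hy.1 x hx.1
  have hlip' : ∀ x ∈ s, ∀ y ∈ s, dist x y ≤ K' * dist (l x) (l y) := fun x hx y hy => by
    simpa [dist_eq_norm, Real.dist_eq] using hbil y hy.1 x hx.1
  have hball : l '' s ⊆ closedEBall z (ENNReal.ofReal t) := by
    rw [closedEBall_ofReal ht]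
    exact (image_mono inter_subset_right).trans (image_preimage_subset l _)
  rw [inter_comm, ← image_inter_preimage]
  calc μH[1] (l '' s) ≤ K * K' * ediam (l '' s) :=
        hausdorffMeasure_one_image_le_mul_ediam hlip hlip'
    _ ≤ K * K' * (2 * ENNReal.ofReal t) := by
        gcongr
        exact (ediam_mono hball).trans ediam_closedEBall_le
    _ = ENNReal.ofReal (2 * K * K' * t) := by
        rw [ENNReal.ofReal_mul (by positivity), ENNReal.ofReal_mul (by positivity),
          ENNReal.ofReal_mul zero_le_two, ENNReal.ofReal_ofNat, ENNReal.ofReal_coe_nnreal,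
          ENNReal.ofReal_coe_nnreal]
        ring
    _ ≤ ENNReal.ofReal (2 * Real.sqrt 2 * K * K' * t) := by
        gcongr
        exact le_mul_of_one_le_right zero_le_two Real.one_lt_sqrt_two.le

/-- If `l : O → ℂ` (with `O ⊆ ℝ` open) is injective, Lipschitz with constant `K`,
and its inverse is Lipschitz with constant `K'`, then the length measure `σ` on
`l(O)` (the 1-dimensional Hausdorff measure restricted to `l(O)`) has modulus of
continuity satisfying `σ(closedBall z t ∩ l(O)) ≤ 2√2·K·K'·t` for all `z ∈ ℂ`
and `t ≥ 0`. -/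
theorem length_measure_modulus_of_continuity
    (O : Set ℝ) (hO : IsOpen O) (l : ℝ → ℂ) (hinj : Set.InjOn l O)
    (K : ℝ) (hK : 0 ≤ K)
    (hLip : ∀ x₁ ∈ O, ∀ x₂ ∈ O, ‖l x₂ - l x₁‖ ≤ K * |x₂ - x₁|)
    (K' : ℝ) (hK' : 0 ≤ K')
    (hbil : ∀ x₁ ∈ O, ∀ x₂ ∈ O, |x₂ - x₁| ≤ K' * ‖l x₂ - l x₁‖) :
    ∀ (z : ℂ) (t : ℝ), 0 ≤ t →
      (μH[1] : Measure ℂ) (closedBall z t ∩ (l '' O)) ≤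
        ENNReal.ofReal (2 * Real.sqrt 2 * K * K' * t) :=
  length_measure_modulus_of_continuity_general O l K hK hLip K' hK' hbil
end

section
/- Let O ⊆ ℝ be open, l : O → ℂ differentiable at every point of O, and suppose there exists c > 0 such that for all x₁, x₂ ∈ O, √((Re l'(x₁))² + (Im l'(x₂))²) ≥ c. If moreover l is injective and O is an interval, then l^{-1} is Lipschitz with Lip(l^{-1}) ≤ 1/c. -/
open Set

/-! The mean value theorem, applied separately to `Re l` and `Im l` on `[x₁, x₂]`, gives
`l x₂ - l x₁ = (Re l'(ξ₁) + i Im l'(ξ₂)) (x₂ - x₁)` for some `ξ₁, ξ₂ ∈ (x₁, x₂)`, so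
`‖l x₂ - l x₁‖ ≥ c |x₂ - x₁|` by the hypothesis on the mixed pairs `(ξ₁, ξ₂)`. -/

theorem exists_mem_Ioo_clm_sub_eq_mul {E : Type*} [NormedAddCommGroup E] [NormedSpace ℝ E]
    (L : E →L[ℝ] ℝ) {f f' : ℝ → E} {a b : ℝ} (hab : a < b) (hf : ContinuousOn f (Icc a b))
    (hff' : ∀ x ∈ Ioo a b, HasDerivAt f (f' x) x) :
    ∃ ξ ∈ Ioo a b, L (f b - f a) = L (f' ξ) * (b - a) := by
  obtain ⟨ξ, hξ, hslope⟩ := exists_hasDerivAt_eq_slope (L ∘ f) (L ∘ f') hab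
    (L.continuous.comp_continuousOn hf) fun x hx => L.hasFDerivAt.comp_hasDerivAt x (hff' x hx)
  refine ⟨ξ, hξ, ?_⟩
  rw [Function.comp_apply, eq_div_iff (sub_pos.2 hab).ne'] at hslope
  rw [map_sub]
  exact hslope.symm

theorem Complex.exists_mem_Ioo_norm_sub_eq {f f' : ℝ → ℂ} {a b : ℝ} (hab : a < b)
    (hf : ContinuousOn f (Icc a b)) (hff' : ∀ x ∈ Ioo a b, HasDerivAt f (f' x) x) :
    ∃ ξ₁ ∈ Ioo a b, ∃ ξ₂ ∈ Ioo a b,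
      ‖f b - f a‖ = √((f' ξ₁).re ^ 2 + (f' ξ₂).im ^ 2) * (b - a) := by
  obtain ⟨ξ₁, hξ₁, hre⟩ := exists_mem_Ioo_clm_sub_eq_mul reCLM hab hf hff'
  obtain ⟨ξ₂, hξ₂, him⟩ := exists_mem_Ioo_clm_sub_eq_mul imCLM hab hf hff'
  simp only [reCLM_apply, imCLM_apply] at hre him
  refine ⟨ξ₁, hξ₁, ξ₂, hξ₂, ?_⟩
  rw [norm_def, normSq_apply, hre, him,
    show (f' ξ₁).re * (b - a) * ((f' ξ₁).re * (b - a))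
        + (f' ξ₂).im * (b - a) * ((f' ξ₂).im * (b - a)) = ((f' ξ₁).re ^ 2 + (f' ξ₂).im ^ 2) * (b - a) ^ 2 by ring,
    Real.sqrt_mul (by positivity), Real.sqrt_sq (sub_pos.2 hab).le]

theorem Set.OrdConnected.mul_sub_le_norm_sub_of_hasDerivWithinAt {O : Set ℝ} (hO : O.OrdConnected)
    {l l' : ℝ → ℂ} (hderiv : ∀ x ∈ O, HasDerivWithinAt l (l' x) O x) {c : ℝ}
    (hlb : ∀ x₁ ∈ O, ∀ x₂ ∈ O, c ≤ √((l' x₁).re ^ 2 + (l' x₂).im ^ 2))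
    {a b : ℝ} (ha : a ∈ O) (hb : b ∈ O) (hab : a < b) :
    c * (b - a) ≤ ‖l b - l a‖ := by
  have hIcc : Icc a b ⊆ O := hO.out ha hb
  have hIoo : Ioo a b ⊆ O := Ioo_subset_Icc_self.trans hIcc
  have hcont : ContinuousOn l (Icc a b) := fun x hx =>
    (hderiv x (hIcc hx)).continuousWithinAt.mono hIcc
  have hderivAt : ∀ x ∈ Ioo a b, HasDerivAt l (l' x) x := fun x hx =>
    (hderiv x (hIoo hx)).hasDerivAt (Filter.mem_of_superset (Ioo_mem_nhds hx.1 hx.2) hIoo)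
  obtain ⟨ξ₁, hξ₁, ξ₂, hξ₂, hnorm⟩ := Complex.exists_mem_Ioo_norm_sub_eq hab hcont hderivAt
  rw [hnorm]
  exact mul_le_mul_of_nonneg_right (hlb ξ₁ (hIoo hξ₁) ξ₂ (hIoo hξ₂)) (sub_pos.2 hab).le

theorem Set.OrdConnected.mul_abs_sub_le_norm_sub_of_hasDerivWithinAt {O : Set ℝ}
    (hO : O.OrdConnected) {l l' : ℝ → ℂ} (hderiv : ∀ x ∈ O, HasDerivWithinAt l (l' x) O x)
    {c : ℝ} (hlb : ∀ x₁ ∈ O, ∀ x₂ ∈ O, c ≤ √((l' x₁).re ^ 2 + (l' x₂).im ^ 2))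
    {a b : ℝ} (ha : a ∈ O) (hb : b ∈ O) :
    c * |b - a| ≤ ‖l b - l a‖ := by
  rcases lt_trichotomy a b with hab | rfl | hba
  · rw [abs_of_pos (sub_pos.2 hab)]
    exact hO.mul_sub_le_norm_sub_of_hasDerivWithinAt hderiv hlb ha hb hab
  · simp
  · rw [abs_sub_comm, abs_of_pos (sub_pos.2 hba), norm_sub_rev]
    exact hO.mul_sub_le_norm_sub_of_hasDerivWithinAt hderiv hlb hb ha hba

theorem inverse_lipschitz_of_deriv_lower_bound_general
    (O : Set ℝ) (hO : O.OrdConnected)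
    (l l' : ℝ → ℂ)
    (hderiv : ∀ x ∈ O, HasDerivWithinAt l (l' x) O x)
    (c : ℝ) (hc : 0 < c)
    (hlb : ∀ x₁ ∈ O, ∀ x₂ ∈ O,
      c ≤ Real.sqrt ((l' x₁).re ^ 2 + (l' x₂).im ^ 2)) :
    ∀ x₁ ∈ O, ∀ x₂ ∈ O, |x₂ - x₁| ≤ (1 / c) * ‖l x₂ - l x₁‖ := by
  intro x₁ h₁ x₂ h₂
  rw [one_div, inv_mul_eq_div, le_div_iff₀ hc, mul_comm]
  exact hO.mul_abs_sub_le_norm_sub_of_hasDerivWithinAt hderiv hlb h₁ h₂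

/-- If `l : O → ℂ` is differentiable on an interval `O ⊆ ℝ`, injective on `O`,
and there is `c > 0` with `√((Re l'(x₁))² + (Im l'(x₂))²) ≥ c` for all
`x₁, x₂ ∈ O`, then the inverse of `l` is Lipschitz with constant at most `1/c`. -/
theorem inverse_lipschitz_of_deriv_lower_bound
    (O : Set ℝ) (hO : O.OrdConnected)
    (l l' : ℝ → ℂ)
    (hderiv : ∀ x ∈ O, HasDerivWithinAt l (l' x) O x)
    (hinj : Set.InjOn l O)
    (c : ℝ) (hc : 0 < c)
    (hlb : ∀ x₁ ∈ O, ∀ x₂ ∈ O,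
      c ≤ Real.sqrt ((l' x₁).re ^ 2 + (l' x₂).im ^ 2)) :
    ∀ x₁ ∈ O, ∀ x₂ ∈ O, |x₂ - x₁| ≤ (1 / c) * ‖l x₂ - l x₁‖ :=
  inverse_lipschitz_of_deriv_lower_bound_general O hO l l' hderiv c hc hlb
end
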